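/- Let R be a Noetherian ring (left and right Noetherian) that is right Krull-homogeneous, and let B be the largest left ideal of R with |B|_l < |R|_l. Then the quotient ring R/B satisfies |R/B|_r = |R|_r. -/

import Mathlib

universe u

/-- `DevLE α o`: the Gabriel–Rentschler deviation of the preorder `α` is at most `o`. -/
def DevLE (α : Type u) [Preorder α] (o : Ordinal.{u}) : Prop :=
  ∀ f : ℕ → α, (∀ n, f (n + 1) ≤ f n) →
    ∃ N : ℕ, ∀ n, N ≤ n →
      f n ≤ f (n + 1) ∨
        ∃ o' : {x : Ordinal.{u} // x < o},
          DevLE {y : α // f (n + 1) ≤ y ∧ y ≤ f n} o'.1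
termination_by o
decreasing_by exact o'.2

/-- The deviation (Krull dimension) of a preorder, as the least ordinal bound. -/
noncomputable def dev (α : Type u) [Preorder α] : Ordinal.{u} := sInf {o | DevLE α o}

/-- The left Krull dimension of a ring: deviation of the lattice of left ideals. -/
noncomputable def lKdim (R : Type u) [Ring R] : Ordinal.{u} := dev (Submodule R R)

/-- The right Krull dimension of a ring: deviation of the lattice of right ideals. -/
noncomputable def rKdim (R : Type u) [Ring R] : Ordinal.{u} := dev (Submodule Rᵐᵒᵖ R)

/-- Krull dimension of a right ideal `J` as a right module: deviation of `[⊥, J]`. -/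
noncomputable def rIdealDim (R : Type u) [Ring R] (J : Submodule Rᵐᵒᵖ R) : Ordinal.{u} :=
  dev {I : Submodule Rᵐᵒᵖ R // I ≤ J}

/-- Krull dimension of a left ideal `J` as a left module. -/
noncomputable def lIdealDim (R : Type u) [Ring R] (J : Submodule R R) : Ordinal.{u} :=
  dev {I : Submodule R R // I ≤ J}

/-- A ring is right Krull homogeneous if every nonzero right ideal has full dimension. -/
def RightKH (R : Type u) [Ring R] : Prop :=
  ∀ J : Submodule Rᵐᵒᵖ R, J ≠ ⊥ → rIdealDim R J = rKdim R

def LeftKH (R : Type u) [Ring R] : Prop :=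
  ∀ J : Submodule R R, J ≠ ⊥ → lIdealDim R J = lKdim R

/-- A two-sided ideal is prime if it is proper and `aRb ⊆ P` implies `a ∈ P` or `b ∈ P`. -/
def IsPrimeT {R : Type u} [Ring R] (P : TwoSidedIdeal R) : Prop :=
  (P : Set R) ≠ Set.univ ∧ ∀ a b : R, (∀ r : R, a * r * b ∈ P) → a ∈ P ∨ b ∈ P

/-- Right Krull dimension of the quotient ring `R/I`. -/
noncomputable def rKdimQ {R : Type u} [Ring R] (I : TwoSidedIdeal R) : Ordinal.{u} :=
  rKdim I.ringCon.Quotient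

noncomputable def lKdimQ {R : Type u} [Ring R] (I : TwoSidedIdeal R) : Ordinal.{u} :=
  lKdim I.ringCon.Quotient

/-- `Λ(R)`: primes with full right Krull dimension. -/
def Lam (R : Type u) [Ring R] : Set (TwoSidedIdeal R) :=
  {P | IsPrimeT P ∧ rKdimQ P = rKdim R}

/-- `Λ'(R)`: primes with full left Krull dimension. -/
def Lam' (R : Type u) [Ring R] : Set (TwoSidedIdeal R) :=
  {P | IsPrimeT P ∧ lKdimQ P = lKdim R}

/-- A two-sided ideal viewed as a right ideal. -/
def rightIdealOf {R : Type u} [Ring R] (I : TwoSidedIdeal R) : Submodule Rᵐᵒᵖ R where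
  carrier := I
  zero_mem' := I.zero_mem
  add_mem' := I.add_mem
  smul_mem' := fun r x hx => I.mul_mem_right x r.unop hx

/-- A two-sided ideal viewed as a left ideal. -/
def leftIdealOf {R : Type u} [Ring R] (I : TwoSidedIdeal R) : Submodule R R where
  carrier := I
  zero_mem' := I.zero_mem
  add_mem' := I.add_mem
  smul_mem' := fun r x hx => I.mul_mem_left r x hx

/-- The right annihilator of a set, as a right ideal. -/
def rAnnIdeal (R : Type u) [Ring R] (S : Set R) : Submodule Rᵐᵒᵖ R where
  carrier := {x | ∀ y ∈ S, y * x = 0}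
  zero_mem' := by intro y _; simp
  add_mem' := by intro a b ha hb y hy; rw [mul_add, ha y hy, hb y hy, add_zero]
  smul_mem' := by
    intro r x hx y hy
    show y * (x * r.unop) = 0
    rw [← mul_assoc, hx y hy, zero_mul]

/-- The left annihilator of a set. -/
def lAnnSet (R : Type u) [Ring R] (S : Set R) : Set R := {x | ∀ y ∈ S, x * y = 0}

/-!
Right ideals of `R/B` are the right ideals of `R` containing `B`, so `|R/B|_r ≤ |R|_r`.
Conversely, let `A = l(B)`. If `A = 0`, write `B = b₁R + ⋯ + bₘR`; then `x ↦ (x bᵢ)ᵢ` embeds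
`R` into `Bᵐ` as left modules and `|R|_l ≤ |B|_l`. So `A ≠ 0`, and `|A|_r = |R|_r` by
homogeneity. As `AB = 0`, the finitely generated right ideal `A = a₁R + ⋯ + aₖR` is an image
of `(R/B)ᵏ`, whence `|A|_r ≤ |R/B|_r`. All these inequalities come from two facts: a strictly
monotone map `β → α` gives `dev β ≤ dev α`, and the middle term of an exact sequence has
deviation at most that of the outer ones.
-/

section Deviation

variable {α : Type u}

theorem DevLE.mono [Preorder α] {o o' : Ordinal.{u}} (h : DevLE α o) (ho : o ≤ o') :
    DevLE α o' := by
  rw [DevLE] at h ⊢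
  intro f hf
  obtain ⟨N, hN⟩ := h f hf
  refine ⟨N, fun n hn => (hN n hn).imp_right ?_⟩
  rintro ⟨o₁, ho₁⟩
  exact ⟨⟨o₁.1, o₁.2.trans_le ho⟩, ho₁⟩

theorem DevLE.of_subsingleton [Preorder α] [Subsingleton α] (o : Ordinal.{u}) : DevLE α o := by
  rw [DevLE]
  exact fun f _ => ⟨0, fun n _ => Or.inl (Subsingleton.elim (f n) (f (n + 1))).le⟩

theorem DevLE.of_strictMono {o : Ordinal.{u}} :
    ∀ {α β : Type u} [Preorder α] [PartialOrder β] (g : β → α), StrictMono g →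
      DevLE α o → DevLE β o := by
  induction o using WellFoundedLT.induction with
  | _ o IH =>
    intro α β _ _ g hg hα
    rw [DevLE] at hα ⊢
    intro f hf
    obtain ⟨N, hN⟩ := hα (g ∘ f) fun n => hg.monotone (hf n)
    refine ⟨N, fun n hn => (hN n hn).imp (fun hle => ?_) fun ⟨o', ho'⟩ => ⟨o', ?_⟩⟩
    · rcases (hf n).eq_or_lt with heq | hlt
      · exact heq.ge
      · exact absurd hle (hg hlt).not_ge
    · exact IH o'.1 o'.2 (fun y => ⟨g y.1, hg.monotone y.2.1, hg.monotone y.2.2⟩)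
        (fun _ _ h => hg h) ho'

theorem DevLE.prod {o : Ordinal.{u}} :
    ∀ {α β : Type u} [PartialOrder α] [PartialOrder β],
      DevLE α o → DevLE β o → DevLE (α × β) o := by
  induction o using WellFoundedLT.induction with
  | _ o IH =>
    intro α β _ _ hα hβ
    rw [DevLE] at hα hβ ⊢
    intro h hh
    obtain ⟨N₁, hN₁⟩ := hα (fun n => (h n).1) fun n => (hh n).1
    obtain ⟨N₂, hN₂⟩ := hβ (fun n => (h n).2) fun n => (hh n).2
    refine ⟨max N₁ N₂, fun n hn => ?_⟩
    rcases hN₁ n (le_of_max_le_left hn) with hstab₁ | ⟨o₁, ho₁⟩ <;>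
      rcases hN₂ n (le_of_max_le_right hn) with hstab₂ | ⟨o₂, ho₂⟩
    · exact Or.inl ⟨hstab₁, hstab₂⟩
    · refine Or.inr ⟨o₂, ho₂.of_strictMono (fun z => ⟨z.1.2, z.2.1.2, z.2.2.2⟩) ?_⟩
      intro z z' hlt
      refine (Prod.lt_iff.mp hlt).elim (fun h₁ => absurd h₁.1 ?_) fun h₂ => h₂.2
      exact (z'.2.2.1.trans (hstab₁.trans z.2.1.1)).not_gt
    · refine Or.inr ⟨o₁, ho₁.of_strictMono (fun z => ⟨z.1.1, z.2.1.1, z.2.2.1⟩) ?_⟩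
      intro z z' hlt
      refine (Prod.lt_iff.mp hlt).elim (fun h₁ => h₁.1) fun h₂ => absurd h₂.2 ?_
      exact (z'.2.2.2.trans (hstab₂.trans z.2.1.2)).not_gt
    · refine Or.inr ⟨⟨max o₁.1 o₂.1, max_lt o₁.2 o₂.2⟩, ?_⟩
      have hprod := IH _ (max_lt o₁.2 o₂.2) (ho₁.mono (le_max_left _ _))
        (ho₂.mono (le_max_right _ _))
      exact hprod.of_strictMono
        (fun z => (⟨z.1.1, z.2.1.1, z.2.2.1⟩, ⟨z.1.2, z.2.1.2, z.2.2.2⟩)) fun _ _ h => h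

/-- Every step of a chain that does not stabilise lies above some `N' > N`, of smaller rank. -/
theorem devLE_Ici_rank [PartialOrder α] [WellFoundedGT α] (N : α) :
    DevLE {x // N ≤ x} (IsWellFounded.rank (· > ·) N) := by
  induction N using WellFoundedGT.induction with
  | _ N IH =>
    rw [DevLE]
    intro f hf
    by_cases hstuck : ∃ n, (f (n + 1)).1 ≤ N
    · obtain ⟨n₀, hn₀⟩ := hstuck
      exact ⟨n₀ + 1, fun n hn => Or.inl <|
        (antitone_nat_of_succ_le hf hn).trans (hn₀.trans (f (n + 1)).2)⟩
    · refine ⟨0, fun n _ => Or.inr ?_⟩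
      have hlt : N < (f (n + 1)).1 := lt_of_le_not_ge (f (n + 1)).2 fun h => hstuck ⟨n, h⟩
      exact ⟨⟨_, IsWellFounded.rank_lt_of_rel hlt⟩,
        (IH _ hlt).of_strictMono (fun y => ⟨y.1.1, y.2.1⟩) fun _ _ h => h⟩

theorem exists_devLE [PartialOrder α] [OrderBot α] [WellFoundedGT α] : ∃ o, DevLE α o :=
  ⟨_, (devLE_Ici_rank ⊥).of_strictMono (fun x => ⟨x, bot_le⟩) fun _ _ h => h⟩

theorem devLE_dev [Preorder α] (h : ∃ o, DevLE α o) : DevLE α (dev α) :=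
  csInf_mem h

theorem dev_le [Preorder α] {o : Ordinal.{u}} (h : DevLE α o) : dev α ≤ o :=
  csInf_le' h

end Deviation

section Submodule

open Submodule LinearMap

variable {S : Type*} [Ring S] {M M₁ M₂ : Type u} [AddCommGroup M] [Module S M]
  [AddCommGroup M₁] [Module S M₁] [AddCommGroup M₂] [Module S M₂] {o : Ordinal.{u}}

/-- A diagram chase shows that `K ↦ (f⁻¹ K, g K)` is strictly monotone. -/
theorem DevLE.submodule_of_exact (f : M₁ →ₗ[S] M) (g : M →ₗ[S] M₂) (hfg : ker g ≤ range f)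
    (h₁ : DevLE (Submodule S M₁) o) (h₂ : DevLE (Submodule S M₂) o) :
    DevLE (Submodule S M) o := by
  refine (h₁.prod h₂).of_strictMono (fun K => (K.comap f, K.map g)) fun K K' hlt => ?_
  refine lt_of_le_not_ge ⟨comap_mono hlt.le, map_mono hlt.le⟩ fun ⟨hcomap, hmap⟩ =>
    hlt.not_ge fun x hx => ?_
  obtain ⟨y, hy, hgy⟩ := hmap ⟨x, hx, rfl⟩
  obtain ⟨z, hz⟩ := hfg (show x - y ∈ ker g by simp [mem_ker, hgy])
  have hz' : f z ∈ K := hcomap (show f z ∈ K' from hz ▸ sub_mem hx (hlt.le hy))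
  simpa [hz] using add_mem hz' hy

theorem DevLE.submodule_pi (h : DevLE (Submodule S M) o) :
    ∀ n : ℕ, DevLE (Submodule S (Fin n → M)) o
  | 0 => DevLE.of_subsingleton o
  | n + 1 => by
    refine DevLE.submodule_of_exact (LinearMap.single S (fun _ => M) 0)
      (LinearMap.funLeft S M Fin.succ) (fun v hv => ⟨v 0, ?_⟩) h (h.submodule_pi n)
    funext i
    refine Fin.cases (by simp) (fun i => ?_) i
    simpa using (congrFun hv i).symm

theorem DevLE.submodule_of_injective (f : M₁ →ₗ[S] M₂) (hf : Function.Injective f)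
    (h : DevLE (Submodule S M₂) o) : DevLE (Submodule S M₁) o :=
  h.of_strictMono _ (map_strictMono_of_injective hf)

theorem DevLE.submodule_le_of_le_range (f : M₁ →ₗ[S] M₂) {N : Submodule S M₂}
    (hN : N ≤ range f) (h : DevLE (Submodule S M₁) o) :
    DevLE {P : Submodule S M₂ // P ≤ N} o := by
  refine h.of_strictMono (fun P => P.1.comap f) (strictMono_of_le_iff_le fun P P' => ?_)
  refine ⟨fun hle => comap_mono hle, fun hle x hx => ?_⟩
  obtain ⟨y, rfl⟩ := hN (P.2 hx)
  exact hle (show f y ∈ P.1 from hx)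

end Submodule

section Ring

open Submodule LinearMap

variable {R : Type u} [Ring R] (B : TwoSidedIdeal R)

instance ringHomSurjective_op_mk' : RingHomSurjective (RingHom.op B.ringCon.mk') :=
  ⟨fun x => by
    obtain ⟨y, hy⟩ := RingCon.mk'_surjective B.ringCon x.unop
    exact ⟨MulOpposite.op y, MulOpposite.unop_injective hy⟩⟩

def rightQuotMk : R →ₛₗ[RingHom.op B.ringCon.mk'] B.ringCon.Quotient where
  toFun := B.ringCon.mk'
  map_add' := map_add _
  map_smul' _ _ := map_mul _ _ _

theorem ker_rightQuotMk : ker (rightQuotMk B) = rightIdealOf B := by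
  ext x
  exact ((RingCon.eq _).trans (B.rel_iff x 0)).trans (by rw [sub_zero]; rfl)

noncomputable def rightIdealQuotOrderIso :
    Submodule B.ringCon.Quotientᵐᵒᵖ B.ringCon.Quotient ≃o Set.Ici (rightIdealOf B) :=
  RelIso.ofSurjective
    (OrderEmbedding.ofMapLEIff
      (fun K => ⟨K.comap (rightQuotMk B), (ker_rightQuotMk B).ge.trans (comap_mono bot_le)⟩)
      fun _ _ => comap_le_comap_iff_of_surjective (RingCon.mk'_surjective B.ringCon))
    fun K => ⟨K.1.map (rightQuotMk B), Subtype.ext <| by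
      show comap _ (map _ K.1) = K.1
      rw [comap_map_eq, ker_rightQuotMk, sup_eq_left.mpr K.2]⟩

def leftAnnihilator : Submodule Rᵐᵒᵖ R where
  carrier := lAnnSet R B
  zero_mem' _ _ := zero_mul _
  add_mem' ha hb y hy := by rw [add_mul, ha y hy, hb y hy, add_zero]
  smul_mem' r x hx y hy := by
    show x * r.unop * y = 0
    rw [mul_assoc, hx _ (B.mul_mem_left _ _ hy)]

theorem DevLE.rightIdeals_ringConQuotient {o : Ordinal.{u}} (h : DevLE (Submodule Rᵐᵒᵖ R) o) :
    DevLE (Submodule B.ringCon.Quotientᵐᵒᵖ B.ringCon.Quotient) o :=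
  h.of_strictMono (fun K => (rightIdealQuotOrderIso B K).1) (rightIdealQuotOrderIso B).strictMono

theorem DevLE.submodule_quotient_rightIdealOf {o : Ordinal.{u}}
    (h : DevLE (Submodule B.ringCon.Quotientᵐᵒᵖ B.ringCon.Quotient) o) :
    DevLE (Submodule Rᵐᵒᵖ (R ⧸ rightIdealOf B)) o :=
  h.of_strictMono _ ((comapMkQRelIso _).trans (rightIdealQuotOrderIso B).symm).strictMono

variable [IsNoetherian Rᵐᵒᵖ R]

theorem rKdimQ_le_rKdim : rKdimQ B ≤ rKdim R :=
  dev_le ((devLE_dev exists_devLE).rightIdeals_ringConQuotient B)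

theorem exists_linearMap_pi_quotient_le_range :
    ∃ (m : ℕ) (ψ : (Fin m → R ⧸ rightIdealOf B) →ₗ[Rᵐᵒᵖ] R), leftAnnihilator B ≤ range ψ := by
  obtain ⟨m, a, ha⟩ := fg_iff_exists_fin_generating_family.mp
    (IsNoetherian.noetherian (leftAnnihilator B))
  have ha_mem : ∀ i, a i ∈ leftAnnihilator B := fun i => ha ▸ subset_span ⟨i, rfl⟩
  let ψ : (Fin m → R ⧸ rightIdealOf B) →ₗ[Rᵐᵒᵖ] R := ∑ i,
    ((rightIdealOf B).liftQ (DistribSMul.toLinearMap Rᵐᵒᵖ R (a i))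
      fun y hy => ha_mem i y hy) ∘ₗ LinearMap.proj i
  refine ⟨m, ψ, ha ▸ span_le.mpr ?_⟩
  rintro _ ⟨i, rfl⟩
  refine ⟨Pi.single i ((rightIdealOf B).mkQ 1), ?_⟩
  simp only [ψ, mkQ_apply, LinearMap.coe_sum, coe_comp, coe_proj, Finset.sum_apply,
    Function.comp_apply, Function.eval, Pi.single_apply, apply_ite, map_zero, Finset.sum_ite_eq',
    Finset.mem_univ, ↓reduceIte]
  exact mul_one (a i)

theorem rIdealDim_leftAnnihilator_le_rKdimQ : rIdealDim R (leftAnnihilator B) ≤ rKdimQ B := by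
  obtain ⟨m, ψ, hψ⟩ := exists_linearMap_pi_quotient_le_range B
  have hQ : DevLE (Submodule B.ringCon.Quotientᵐᵒᵖ B.ringCon.Quotient) (rKdimQ B) :=
    devLE_dev ⟨_, (devLE_dev exists_devLE).rightIdeals_ringConQuotient B⟩
  have hQm := (hQ.submodule_quotient_rightIdealOf B).submodule_pi m
  exact dev_le (hQm.submodule_le_of_le_range ψ hψ)

theorem exists_injective_linearMap_pi_of_leftAnnihilator_eq_bot (h : leftAnnihilator B = ⊥) :
    ∃ (m : ℕ) (φ : R →ₗ[R] (Fin m → leftIdealOf B)), Function.Injective φ := by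
  obtain ⟨m, b, hb⟩ := fg_iff_exists_fin_generating_family.mp
    (IsNoetherian.noetherian (rightIdealOf B))
  have hb_mem : ∀ i, b i ∈ leftIdealOf B := fun i =>
    (hb ▸ subset_span ⟨i, rfl⟩ : b i ∈ rightIdealOf B)
  refine ⟨m, LinearMap.pi fun i => LinearMap.toSpanSingleton R _ ⟨b i, hb_mem i⟩,
    (injective_iff_map_eq_zero _).mpr fun x hx => ?_⟩
  have hxb : rightIdealOf B ≤ rAnnIdeal R {x} := by
    rw [← hb, span_le]
    rintro _ ⟨i, rfl⟩ _ rfl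
    simpa using congrArg Subtype.val (congrFun hx i)
  have hx : x ∈ leftAnnihilator B := fun y hy => hxb hy x rfl
  simpa [h] using hx

theorem lKdim_le_lIdealDim_of_leftAnnihilator_eq_bot [IsNoetherianRing R]
    (h : leftAnnihilator B = ⊥) : lKdim R ≤ lIdealDim R (leftIdealOf B) := by
  obtain ⟨m, φ, hφ⟩ := exists_injective_linearMap_pi_of_leftAnnihilator_eq_bot B h
  have hB : DevLE {I : Submodule R R // I ≤ leftIdealOf B} (lIdealDim R (leftIdealOf B)) := by
    obtain ⟨o, ho⟩ := exists_devLE (α := Submodule R R)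
    exact devLE_dev ⟨o, ho.of_strictMono Subtype.val fun _ _ h => h⟩
  have hBm := (hB.of_strictMono _ (MapSubtype.orderIso _).strictMono).submodule_pi m
  exact dev_le (hBm.submodule_of_injective φ hφ)

end Ring

theorem stmt4_general (R : Type u) [Ring R] [IsNoetherianRing R] [IsNoetherianRing Rᵐᵒᵖ]
    (hKH : RightKH R) (B : TwoSidedIdeal R)
    (h1 : lIdealDim R (leftIdealOf B) < lKdim R) :
    rKdimQ B = rKdim R := by
  have : IsNoetherian Rᵐᵒᵖ R :=
    isNoetherian_of_linearEquiv (MulOpposite.opLinearEquiv Rᵐᵒᵖ).symm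
  have hA : leftAnnihilator B ≠ ⊥ := fun h =>
    (lKdim_le_lIdealDim_of_leftAnnihilator_eq_bot B h).not_gt h1
  exact le_antisymm (rKdimQ_le_rKdim B) (hKH _ hA ▸ rIdealDim_leftAnnihilator_le_rKdimQ B)

/-- If `R` is Noetherian and right Krull-homogeneous and `B` is the largest
left ideal with `|B|_l < |R|_l`, then `|R/B|_r = |R|_r`. -/
theorem stmt4 (R : Type u) [Ring R] [IsNoetherianRing R] [IsNoetherianRing Rᵐᵒᵖ]
    (hKH : RightKH R) (B : TwoSidedIdeal R)
    (h1 : lIdealDim R (leftIdealOf B) < lKdim R)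
    (h2 : ∀ K : Submodule R R, lIdealDim R K < lKdim R → K ≤ leftIdealOf B) :
    rKdimQ B = rKdim R :=
  stmt4_general R hKH B h1
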